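/- Let W = (W, I, ≼, ∘, ∼, −, ¬) be a DqRA-frame. Define, for upsets U of (W,≼), ¬U = {x ∈ W : x^¬ ∉ U}. Then the complex algebra W^+ = (Up(W,≼), ∩, ∪, ∘, I, ∼, −, ¬) is a distributive quasi relation algebra: Up(W,≼) is closed under ¬, and ¬ satisfies ¬¬U = U, ¬(U∩V) = ¬U ∪ ¬V (Dm), and ¬(U∘V) = ∼(−¬V ∘ −¬U) (Dp). -/

import Mathlib

/-- Extension of a binary set-operation `c : W → W → Set W` to subsets:
`U ∘ V = ⋃ { x ∘ y : x ∈ U, y ∈ V }`. -/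
def setComp {W : Type*} (c : W → W → Set W) (U V : Set W) : Set W :=
  {z | ∃ x ∈ U, ∃ y ∈ V, z ∈ c x y}

/-- A DInFL-frame `(W, I, ≼, ∘, ∼, −)`. -/
structure DInFLFrame (W : Type*) where
  I : Set W
  le : W → W → Prop
  le_refl : ∀ x, le x x
  le_trans : ∀ x y z, le x y → le y z → le x z
  le_antisymm : ∀ x y, le x y → le y x → x = y
  comp : W → W → Set W
  tld : W → W
  mns : W → W
  ax1 : ∀ x y, (le x y ↔ y ∈ setComp comp I {x}) ∧ (le x y ↔ y ∈ setComp comp {x} I)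
  ax2 : ∀ x y, le x y → x ∈ I → y ∈ I
  ax3 : ∀ u v x y, le x y → x ∈ comp u v → y ∈ comp u v
  ax4 : ∀ x y z, setComp comp (comp x y) {z} = setComp comp {x} (comp y z)
  ax5 : ∀ x y z, tld z ∈ comp x y ↔ mns y ∈ comp z x
  ax6 : ∀ x, le (mns (tld x)) x ∧ le (tld (mns x)) x

/-- Upsets of the underlying poset of a DInFL-frame. -/
def DInFLFrame.IsUpset {W : Type*} (F : DInFLFrame W) (U : Set W) : Prop :=
  ∀ x y, F.le x y → x ∈ U → y ∈ U

/-- The operation `∼U = {w : w⁻ ∉ U}` of the complex algebra. -/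
def DInFLFrame.sneg {W : Type*} (F : DInFLFrame W) (U : Set W) : Set W :=
  {w | F.mns w ∉ U}

/-- The operation `−U = {w : w^∼ ∉ U}` of the complex algebra. -/
def DInFLFrame.mneg {W : Type*} (F : DInFLFrame W) (U : Set W) : Set W :=
  {w | F.tld w ∉ U}

/-- A DqRA-frame: a DInFL-frame with a De Morgan operation `ng` (¬) satisfying
(7) `x^{¬¬} = x`, (8) `¬` is order-reversing, and
(9) `z⁻ ∈ x∘y ⟺ z^¬ ∈ y^{∼¬} ∘ x^{∼¬}`. -/
structure DqRAFrame (W : Type*) extends DInFLFrame W where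
  ng : W → W
  ax7 : ∀ x, ng (ng x) = x
  ax8 : ∀ x y, le x y → le (ng y) (ng x)
  ax9 : ∀ x y z, mns z ∈ comp x y ↔ ng z ∈ comp (ng (tld y)) (ng (tld x))

/-- The operation `¬U = {x : x^¬ ∉ U}` of the complex algebra of a DqRA-frame. -/
def DqRAFrame.nneg {W : Type*} (F : DqRAFrame W) (U : Set W) : Set W :=
  {x | F.ng x ∉ U}

/-! The frame negation `¬` is an involution, so `¬U` is the complement of the image of `U` under
`¬`: this makes `¬` an order-reversing involution of upsets turning `∩` into `∪`. For (Dp), axiom (9)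
says that `(a, b) ↦ (b^{∼¬}, a^{∼¬})` carries the factorisations `z⁻ ∈ a ∘ b` to the factorisations
`z^¬ ∈ b^{∼¬} ∘ a^{∼¬}`, and it is a bijection because `x^{−∼} = x` in every DInFL-frame. -/

namespace DInFLFrame

variable {W : Type*}

/-- The reverse inequality to (6) holds too: by (1) and (5), `x⁻ ∈ x⁻ ∘ e` with `e ∈ I` gives
`x^{−∼} ∈ e ∘ x`. -/
lemma tld_mns (F : DInFLFrame W) (x : W) : F.tld (F.mns x) = x := by
  refine F.le_antisymm _ _ (F.ax6 x).2 ?_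
  obtain ⟨_, rfl, e, he, hmem⟩ := ((F.ax1 (F.mns x) (F.mns x)).2).mp (F.le_refl _)
  exact ((F.ax1 x _).1).mpr ⟨e, he, x, rfl, (F.ax5 e x (F.mns x)).mpr hmem⟩

end DInFLFrame

namespace DqRAFrame

variable {W : Type*} (F : DqRAFrame W)

lemma ng_tld_mns_ng (x : W) : F.ng (F.tld (F.mns (F.ng x))) = x := by
  rw [F.toDInFLFrame.tld_mns, F.ax7]

lemma isUpset_nneg {U : Set W} (hU : F.IsUpset U) : F.IsUpset (F.nneg U) :=
  fun _ _ hxy hx hy => hx (hU _ _ (F.ax8 _ _ hxy) hy)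

@[simp]
lemma nneg_nneg (U : Set W) : F.nneg (F.nneg U) = U := by
  ext x
  simp [nneg, F.ax7]

lemma nneg_inter (U V : Set W) : F.nneg (U ∩ V) = F.nneg U ∪ F.nneg V :=
  Set.ext fun _ => not_and_or

lemma mem_mneg_nneg {U : Set W} {x : W} :
    x ∈ F.mneg (F.nneg U) ↔ F.ng (F.tld x) ∈ U := by
  simp [DInFLFrame.mneg, nneg]

lemma mns_mem_setComp_mneg_nneg_iff (U V : Set W) (x : W) :
    F.mns x ∈ setComp F.comp (F.mneg (F.nneg V)) (F.mneg (F.nneg U)) ↔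
      F.ng x ∈ setComp F.comp U V := by
  simp only [setComp, Set.mem_ofPred_eq, mem_mneg_nneg]
  constructor
  · rintro ⟨a, ha, b, hb, hmem⟩
    exact ⟨_, hb, _, ha, (F.ax9 a b x).mp hmem⟩
  · rintro ⟨u, hu, v, hv, hmem⟩
    refine ⟨F.mns (F.ng v), by rwa [ng_tld_mns_ng], F.mns (F.ng u), by rwa [ng_tld_mns_ng], ?_⟩
    rwa [F.ax9, ng_tld_mns_ng, ng_tld_mns_ng]

lemma nneg_setComp (U V : Set W) :
    F.nneg (setComp F.comp U V) =
      F.sneg (setComp F.comp (F.mneg (F.nneg V)) (F.mneg (F.nneg U))) := by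
  ext x
  exact (F.mns_mem_setComp_mneg_nneg_iff U V x).not.symm

end DqRAFrame

/-- The complex algebra `W⁺ = (Up(W,≼), ∩, ∪, ∘, I, ∼, −, ¬)` of a DqRA-frame is
a distributive quasi relation algebra: upsets are closed under `¬`, and `¬` is
involutive and satisfies (Dm) and (Dp). -/
theorem complex_algebra_is_DqRA {W : Type*} (F : DqRAFrame W) :
    (∀ U, F.toDInFLFrame.IsUpset U → F.toDInFLFrame.IsUpset (F.nneg U)) ∧
    (∀ U, F.toDInFLFrame.IsUpset U → F.nneg (F.nneg U) = U) ∧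
    (∀ U V, F.toDInFLFrame.IsUpset U → F.toDInFLFrame.IsUpset V →
      F.nneg (U ∩ V) = F.nneg U ∪ F.nneg V) ∧
    (∀ U V, F.toDInFLFrame.IsUpset U → F.toDInFLFrame.IsUpset V →
      F.nneg (setComp F.comp U V) =
        F.toDInFLFrame.sneg (setComp F.comp
          (F.toDInFLFrame.mneg (F.nneg V)) (F.toDInFLFrame.mneg (F.nneg U)))) :=
  ⟨fun _ => F.isUpset_nneg, fun U _ => F.nneg_nneg U, fun U V _ _ => F.nneg_inter U V,
    fun U V _ _ => F.nneg_setComp U V⟩
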